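/- Let G be a finite strictly competitive extensive game with perfect information, and let Γ^k(G) denote the result of k rounds of eliminating all weakly dominated strategies from the strategic form Γ(G). For each player i ∈ {1,2} and every k ≥ 0: if win_i(Γ^k(G)) = ∅, then lose_{-i}(Γ^k(G)) ∩ Γ^{k+2}_{-i}(G) = ∅. -/

import Mathlib

/-!
Let `M = p_i^max(Γ^k(G))` and `b ∈ lose_{-i}(Γ^k(G))`. Getting at least `M` against `b` is
preserved under weak domination, so some `s̄ ∈ Γ^{k+1}_i(G)` gets exactly `M` against `b`.
By induction on the tree, either `i` has a strategy securing `M`, and then some strategy of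
`Γ^k_i(G)` still secures `M` against `Γ^k_{-i}(G)`, i.e. lies in `win_i(Γ^k(G))`; or the opponent
has a deviation `c` from `b` that pushes `s̄` below `M` and is at least as good for him as `b`
against every `s ∈ Γ^{k+1}_i(G)`: an `s` doing better against `c` than against `b` would get
less than `M` against `b`, and its repair would weakly dominate it in `Γ^k(G)`.
By strict competitiveness `c` then weakly dominates `b` in `Γ^{k+1}(G)`; and a strategy that is
weakly dominated by any strategy, surviving or not, is also dominated by a survivor, so
`b ∉ Γ^{k+2}(G)`.
-/

/-- A finite extensive game with perfect information: a finite rooted tree whose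
leaves carry an outcome for each player and whose internal nodes carry the player
to move and a nonempty finite family of children. -/
inductive ExtGame (ι : Type) : Type where
  | leaf : (ι → ℝ) → ExtGame ι
  | node : ι → (m : ℕ) → (Fin (m + 1) → ExtGame ι) → ExtGame ι

namespace ExtGame

variable {ι : Type}

/-- A strategy of player `i`: at every node where it is `i`'s turn, a choice of a child. -/
def Strategy (i : ι) : ExtGame ι → Type
  | .leaf _ => PUnit
  | .node j m children => (i = j → Fin (m + 1)) × ∀ c : Fin (m + 1), Strategy i (children c)

/-- The outcome (payoff vector) when every player follows his strategy. -/
def outcome : (G : ExtGame ι) → (∀ i, G.Strategy i) → ι → ℝ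
  | .leaf o, _ => o
  | .node j _ children, σ =>
      outcome (children ((σ j).1 rfl)) (fun i => (σ i).2 ((σ j).1 rfl))

/-- Nodes of the game tree, identified by the path from the root. -/
inductive Node : ExtGame ι → Type where
  | root (G : ExtGame ι) : Node G
  | child {j : ι} {m : ℕ} {children : Fin (m + 1) → ExtGame ι}
      (c : Fin (m + 1)) : Node (children c) → Node (.node j m children)

/-- The subgame rooted at a node. -/
def subgameAt : {G : ExtGame ι} → Node G → ExtGame ι
  | _, .root G => G
  | _, .child c v => subgameAt v

/-- The joint strategy of the subgame rooted at `v` induced by a joint strategy. -/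
def restrictProfile : {G : ExtGame ι} → (∀ i, G.Strategy i) → (v : Node G) →
    ∀ i, (subgameAt v).Strategy i
  | _, σ, .root _ => σ
  | _, σ, .child c v => restrictProfile (fun i => (σ i).2 c) v

/-- Nash equilibrium of (the strategic form of) an extensive game. -/
def NashEq [DecidableEq ι] (G : ExtGame ι) (σ : ∀ i, G.Strategy i) : Prop :=
  ∀ (i : ι) (t : G.Strategy i), G.outcome σ i ≥ G.outcome (Function.update σ i t) i

/-- Subgame perfect equilibrium: the induced joint strategy is a Nash equilibrium
in the subgame rooted at every node. -/
def SPE [DecidableEq ι] (G : ExtGame ι) (σ : ∀ i, G.Strategy i) : Prop :=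
  ∀ v : Node G, (subgameAt v).NashEq (restrictProfile σ v)

/-- At the root (if it is a non-leaf), the player to move chooses a child whose
subgame outcome (under the induced strategies) is maximal for him. -/
def BestAtRoot : (G : ExtGame ι) → (∀ i, G.Strategy i) → Prop
  | .leaf _, _ => True
  | .node j _ children, σ =>
      ∀ c, outcome (children ((σ j).1 rfl)) (fun i => (σ i).2 ((σ j).1 rfl)) j ≥
        outcome (children c) (fun i => (σ i).2 c) j

/-- The list of payoff vectors at the leaves of the game tree (one entry per leaf). -/
def leavesList : ExtGame ι → List (ι → ℝ)
  | .leaf o => [o]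
  | .node _ _ children => (List.ofFn fun c => leavesList (children c)).flatten

/-- The game is without relevant ties: at every non-leaf node `u` with `turn(u) = i`,
the outcome function of player `i` is injective on the leaves of the subtree rooted at `u`. -/
def NoRelevantTies : ExtGame ι → Prop
  | .leaf _ => True
  | .node j m children =>
      ((ExtGame.node j m children).leavesList.Pairwise fun o o' => o j ≠ o' j) ∧
      ∀ c, NoRelevantTies (children c)

/-- The player to move at a node (`none` if the node is a leaf). -/
def turnAt {G : ExtGame ι} (v : Node G) : Option ι :=
  match subgameAt v with
  | .leaf _ => none
  | .node j _ _ => some j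

end ExtGame


/-- A two-player extensive game (players indexed by `Bool`, the opponent of `i` being `!i`)
is strictly competitive if its strategic form is. -/
def StrictlyCompetitiveExt (G : ExtGame Bool) : Prop :=
  ∀ (i : Bool) (σ τ : ∀ j, G.Strategy j),
    G.outcome σ i ≥ G.outcome τ i ↔ G.outcome σ (!i) ≤ G.outcome τ (!i)

/-- In the strategic form of the two-player game `G`, `t` weakly dominates `s`
(strategies of player `i`) in the game restricted to the strategy sets `A j`. -/
def WDomIn (G : ExtGame Bool) (A : ∀ j, Set (G.Strategy j)) (i : Bool)
    (t s : G.Strategy i) : Prop :=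
  (∀ σ : ∀ j, G.Strategy j, σ (!i) ∈ A (!i) →
      G.outcome (Function.update σ i t) i ≥ G.outcome (Function.update σ i s) i) ∧
  (∃ σ : ∀ j, G.Strategy j, σ (!i) ∈ A (!i) ∧
      G.outcome (Function.update σ i t) i > G.outcome (Function.update σ i s) i)

/-- One round of elimination of ALL weakly dominated strategies. -/
def elimAll (G : ExtGame Bool) (A : ∀ j, Set (G.Strategy j)) : ∀ j, Set (G.Strategy j) :=
  fun j => {s | s ∈ A j ∧ ¬ ∃ t ∈ A j, WDomIn G A j t s}

/-- `Γ^k(G)`: the strategy sets after `k` rounds of elimination of all weakly dominated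
strategies from the strategic form of `G`. -/
def gamma (G : ExtGame Bool) : ℕ → ∀ j, Set (G.Strategy j)
  | 0 => fun _ => Set.univ
  | k + 1 => elimAll G (gamma G k)

/-- `p_i^max(H)`: the maximal payoff player `i` can receive in the restricted game `A`. -/
noncomputable def pmax (G : ExtGame Bool) (A : ∀ j, Set (G.Strategy j)) (i : Bool) : ℝ :=
  sSup {x : ℝ | ∃ σ : ∀ j, G.Strategy j, (∀ j, σ j ∈ A j) ∧ x = G.outcome σ i}

/-- `win_i(H)`: the strategies of player `i` that always give him `p_i^max(H)` in the
restricted game `A`. -/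
def winSet (G : ExtGame Bool) (A : ∀ j, Set (G.Strategy j)) (i : Bool) :
    Set (G.Strategy i) :=
  {si | si ∈ A i ∧ ∀ σ : ∀ j, G.Strategy j, σ (!i) ∈ A (!i) →
    G.outcome (Function.update σ i si) i = pmax G A i}

/-- `lose_{-i}(H)`: the strategies of player `-i` against which player `i` can obtain
`p_i^max(H)` in the restricted game `A`. -/
def loseSet (G : ExtGame Bool) (A : ∀ j, Set (G.Strategy j)) (i : Bool) :
    Set (G.Strategy (!i)) :=
  {sb | sb ∈ A (!i) ∧ ∃ σ : ∀ j, G.Strategy j,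
    σ i ∈ A i ∧ σ (!i) = sb ∧ G.outcome σ i = pmax G A i}

namespace ExtGame

instance instFiniteStrategy {ι : Type} (i : ι) : (G : ExtGame ι) → Finite (G.Strategy i)
  | .leaf _ => inferInstanceAs (Finite PUnit)
  | .node j m ch =>
    have := fun a => instFiniteStrategy i (ch a)
    inferInstanceAs (Finite ((i = j → Fin (m + 1)) × ∀ a, (ch a).Strategy i))

instance instInhabitedStrategy {ι : Type} (i : ι) : (G : ExtGame ι) → Inhabited (G.Strategy i)
  | .leaf _ => ⟨PUnit.unit⟩
  | .node _ _ ch => ⟨(fun _ => 0, fun a => (instInhabitedStrategy i (ch a)).default)⟩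

variable {G : ExtGame Bool} {i : Bool}

def pair : (i : Bool) → G.Strategy i → G.Strategy (!i) → ∀ j, G.Strategy j
  | true, s, c => fun | true => s | false => c
  | false, s, c => fun | true => c | false => s

@[simp] theorem pair_not (s : G.Strategy i) (c : G.Strategy (!i)) : pair i s c (!i) = c := by
  cases i <;> rfl

theorem pair_eta (σ : ∀ j, G.Strategy j) : pair i (σ i) (σ (!i)) = σ := by
  funext j; cases i <;> cases j <;> rfl

theorem pair_mem {A : ∀ j, Set (G.Strategy j)} {s : G.Strategy i} {c : G.Strategy (!i)}
    (hs : s ∈ A i) (hc : c ∈ A (!i)) (j : Bool) : pair i s c j ∈ A j := by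
  cases i <;> cases j <;> assumption

theorem update_self_eq_pair (σ : ∀ j, G.Strategy j) (t : G.Strategy i) :
    Function.update σ i t = pair i t (σ (!i)) := by
  funext j; cases i <;> cases j <;> rfl

def pay (i : Bool) (s : G.Strategy i) (c : G.Strategy (!i)) : ℝ :=
  G.outcome (pair i s c) i

theorem pay_leaf (f : Bool → ℝ) (s : (leaf f).Strategy i) (c : (leaf f).Strategy (!i)) :
    pay i s c = f i := by
  cases i <;> rfl

theorem pair_snd {m : ℕ} {ch : Fin (m + 1) → ExtGame Bool} {j : Bool}
    (s : (node j m ch).Strategy i) (c : (node j m ch).Strategy (!i)) (a : Fin (m + 1)) :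
    (fun p => (pair i s c p).2 a) = pair i (s.2 a) (c.2 a) := by
  funext p; cases i <;> cases p <;> rfl

section Node

variable {M : ℝ} {m : ℕ} {ch : Fin (m + 1) → ExtGame Bool}

theorem pay_node_self (s : (node i m ch).Strategy i) (c : (node i m ch).Strategy (!i)) :
    pay i s c = pay i (s.2 (s.1 rfl)) (c.2 (s.1 rfl)) := by
  have h : pay i s c = (ch (s.1 rfl)).outcome (fun p => (pair i s c p).2 (s.1 rfl)) i := by
    cases i <;> rfl
  rw [h, pair_snd]; rfl

theorem pay_node_not (s : (node (!i) m ch).Strategy i) (c : (node (!i) m ch).Strategy (!i)) :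
    pay i s c = pay i (s.2 (c.1 rfl)) (c.2 (c.1 rfl)) := by
  have h : pay i s c = (ch (c.1 rfl)).outcome (fun p => (pair i s c p).2 (c.1 rfl)) i := by
    cases i <;> rfl
  rw [h, pair_snd]; rfl

def Secures (i : Bool) (M : ℝ) (s : G.Strategy i) : Prop :=
  ∀ c, M ≤ pay i s c

def KeepsBelow (i : Bool) (M : ℝ) (c : G.Strategy (!i)) : Prop :=
  ∀ s, pay i s c < M

def Repairable (i : Bool) (M : ℝ) (s : G.Strategy i) (b : G.Strategy (!i)) : Prop :=
  ∃ d, M ≤ pay i d b ∧ ∀ c, min M (pay i s c) ≤ pay i d c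

def IsPunishingDeviation (i : Bool) (M : ℝ) (sb : G.Strategy i) (b c : G.Strategy (!i)) :
    Prop :=
  pay i sb c < M ∧ ∀ s, pay i s c ≤ pay i s b ∨ pay i s c < M ∧ Repairable i M s b

theorem Secures.repairable {d s : G.Strategy i} {b : G.Strategy (!i)} (hd : Secures i M d) :
    Repairable i M s b :=
  ⟨d, hd b, fun c => (min_le_left _ _).trans (hd c)⟩

theorem Secures.node_self {a : Fin (m + 1)} {s : (ch a).Strategy i} (hs : Secures i M s)
    (f : ∀ a, (ch a).Strategy i) :
    Secures i M (G := node i m ch) (fun _ => a, Function.update f a s) := fun c =>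
  (pay_node_self _ c).symm ▸ by simpa using hs (c.2 a)

theorem Secures.node_not {f : ∀ a, (ch a).Strategy i} (hf : ∀ a, Secures i M (f a))
    (g : i = !i → Fin (m + 1)) : Secures i M (G := node (!i) m ch) (g, f) := fun c =>
  (hf _ _).trans_eq (pay_node_not (g, f) c).symm

theorem KeepsBelow.node_self {f : ∀ a, (ch a).Strategy (!i)} (hf : ∀ a, KeepsBelow i M (f a))
    (g : (!i) = i → Fin (m + 1)) : KeepsBelow i M (G := node i m ch) (g, f) := fun s =>
  (pay_node_self s _).trans_lt (hf _ _)

theorem KeepsBelow.node_not {a : Fin (m + 1)} {c : (ch a).Strategy (!i)} (hc : KeepsBelow i M c)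
    (f : ∀ a, (ch a).Strategy (!i)) :
    KeepsBelow i M (G := node (!i) m ch) (fun _ => a, Function.update f a c) := fun s =>
  (pay_node_not s _).symm ▸ by simpa using hc (s.2 a)

theorem Repairable.node_self {s : (node i m ch).Strategy i} {b : (node i m ch).Strategy (!i)}
    {a : Fin (m + 1)} (hs : s.1 rfl = a) (h : Repairable i M (s.2 a) (b.2 a)) :
    Repairable i M s b := by
  obtain ⟨d, hdb, hd⟩ := h
  refine ⟨(s.1, Function.update s.2 a d), ?_, fun c => ?_⟩
  · erw [pay_node_self]
    simp only
    rw [hs, Function.update_self]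
    exact hdb
  · erw [pay_node_self, pay_node_self]
    simp only
    rw [hs, Function.update_self]
    exact hd _

theorem Repairable.node_not {s : (node (!i) m ch).Strategy i}
    {b : (node (!i) m ch).Strategy (!i)} {a : Fin (m + 1)} (hb : b.1 rfl = a)
    (h : Repairable i M (s.2 a) (b.2 a)) : Repairable i M s b := by
  obtain ⟨d, hdb, hd⟩ := h
  refine ⟨(s.1, Function.update s.2 a d), ?_, fun c => ?_⟩
  · erw [pay_node_not]
    simp only
    rw [hb, Function.update_self]
    exact hdb
  · erw [pay_node_not, pay_node_not]
    simp only
    by_cases hc : c.1 rfl = a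
    · rw [hc, Function.update_self]
      exact hd _
    · rw [Function.update_of_ne hc]
      exact min_le_right _ _

theorem IsPunishingDeviation.node_self {sb : (node i m ch).Strategy i}
    {b : (node i m ch).Strategy (!i)} {c : (ch (sb.1 rfl)).Strategy (!i)}
    (h : IsPunishingDeviation i M (sb.2 (sb.1 rfl)) (b.2 (sb.1 rfl)) c) :
    IsPunishingDeviation i M sb b (b.1, Function.update b.2 (sb.1 rfl) c) := by
  refine ⟨?_, fun s => ?_⟩
  · erw [pay_node_self]
    simpa using h.1
  · erw [pay_node_self, pay_node_self]
    simp only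
    by_cases hs : s.1 rfl = sb.1 rfl
    · rw [hs, Function.update_self]
      exact (h.2 _).imp_right fun h' => ⟨h'.1, h'.2.node_self hs⟩
    · rw [Function.update_of_ne hs]
      exact .inl le_rfl

theorem IsPunishingDeviation.node_not {sb : (node (!i) m ch).Strategy i}
    {b : (node (!i) m ch).Strategy (!i)} {c : (ch (b.1 rfl)).Strategy (!i)}
    (h : IsPunishingDeviation i M (sb.2 (b.1 rfl)) (b.2 (b.1 rfl)) c) :
    IsPunishingDeviation i M sb b (b.1, Function.update b.2 (b.1 rfl) c) := by
  refine ⟨?_, fun s => ?_⟩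
  · erw [pay_node_not]
    simpa using h.1
  · erw [pay_node_not, pay_node_not]
    simp only [Function.update_self]
    exact (h.2 _).imp_right fun h' => ⟨h'.1, h'.2.node_not rfl⟩

end Node

theorem exists_secures_or_exists_keepsBelow (i : Bool) (M : ℝ) (G : ExtGame Bool) :
    (∃ s : G.Strategy i, Secures i M s) ∨ ∃ c : G.Strategy (!i), KeepsBelow i M c := by
  induction G with
  | leaf f =>
    by_cases h : M ≤ f i
    · exact .inl ⟨default, fun c => (pay_leaf f _ c).symm ▸ h⟩
    · exact .inr ⟨default, fun s => (pay_leaf f s _).symm ▸ not_le.1 h⟩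
  | node j m ch ih =>
    obtain rfl | rfl : j = i ∨ j = !i := Bool.eq_or_eq_not j i
    · by_cases h : ∃ a, ∃ s : (ch a).Strategy j, Secures j M s
      · obtain ⟨a, s, hs⟩ := h
        exact .inl ⟨_, hs.node_self default⟩
      · choose c hc using fun a => (ih a).resolve_left (not_exists.1 h a)
        exact .inr ⟨_, KeepsBelow.node_self hc fun _ => 0⟩
    · by_cases h : ∃ a, ∃ c : (ch a).Strategy (!i), KeepsBelow i M c
      · obtain ⟨a, c, hc⟩ := h
        exact .inr ⟨_, hc.node_not default⟩
      · choose s hs using fun a => (ih a).resolve_right (not_exists.1 h a)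
        exact .inl ⟨_, Secures.node_not hs fun _ => 0⟩

/-- The deviation `c` leaves `b` at a node on the play of `(sb, b)` where the opponent can keep
`i` below `M`, while `i` can secure `M` in the subtree that `b` enters there. Strategies not
reaching that node are unaffected; those reaching it get less than `M` against `c` and are
repaired by securing `M` in that subtree. -/
theorem exists_secures_or_exists_isPunishingDeviation (i : Bool) (M : ℝ) (G : ExtGame Bool)
    (sb : G.Strategy i) (b : G.Strategy (!i)) (h : pay i sb b = M) :
    (∃ s : G.Strategy i, Secures i M s) ∨ ∃ c, IsPunishingDeviation i M sb b c := by
  induction G with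
  | leaf f => exact .inl ⟨sb, fun c => by rw [← h, pay_leaf, pay_leaf]⟩
  | node j m ch ih =>
    obtain rfl | rfl : j = i ∨ j = !i := Bool.eq_or_eq_not j i
    · erw [pay_node_self] at h
      rcases ih _ _ _ h with ⟨s, hs⟩ | ⟨c, hc⟩
      · exact .inl ⟨_, hs.node_self sb.2⟩
      · exact .inr ⟨_, hc.node_self⟩
    · erw [pay_node_not] at h
      rcases ih _ _ _ h with ⟨s, hs⟩ | ⟨c, hc⟩
      · rcases exists_secures_or_exists_keepsBelow i M (node (!i) m ch) with hsec | ⟨t, ht⟩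
        · exact .inl hsec
        · exact .inr ⟨t, ht sb, fun s' => .inr ⟨ht s', hs.repairable.node_not rfl⟩⟩
      · exact .inr ⟨_, hc.node_not⟩

end ExtGame

open ExtGame

section Elimination

variable {G : ExtGame Bool} {i : Bool}

theorem wDomIn_iff {A : ∀ j, Set (G.Strategy j)} {t s : G.Strategy i} :
    WDomIn G A i t s ↔
      (∀ c ∈ A (!i), pay i s c ≤ pay i t c) ∧ ∃ c ∈ A (!i), pay i s c < pay i t c := by
  refine and_congr ⟨fun h c hc => ?_, fun h σ hσ => ?_⟩
    ⟨fun ⟨σ, hσ, hlt⟩ => ?_, fun ⟨c, hc, hlt⟩ => ?_⟩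
  · simpa [pay, update_self_eq_pair] using h (pair i s c) (by simpa using hc)
  · simpa [pay, update_self_eq_pair] using h _ hσ
  · exact ⟨σ (!i), hσ, by simpa [pay, update_self_eq_pair] using hlt⟩
  · exact ⟨pair i s c, by simpa using hc, by simpa [pay, update_self_eq_pair] using hlt⟩

theorem StrictlyCompetitiveExt.wDomIn_not_iff (hsc : StrictlyCompetitiveExt G)
    {A : ∀ j, Set (G.Strategy j)} {x y : G.Strategy (!i)} :
    WDomIn G A (!i) x y ↔
      (∀ s ∈ A i, pay i s x ≤ pay i s y) ∧ ∃ s ∈ A i, pay i s x < pay i s y := by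
  have hle : ∀ s (x y : G.Strategy (!i)), pay i s x ≤ pay i s y ↔
      G.outcome (pair i s y) (!i) ≤ G.outcome (pair i s x) (!i) := fun s _ _ => hsc i _ _
  have hlt : ∀ s (x y : G.Strategy (!i)), pay i s x < pay i s y ↔
      G.outcome (pair i s y) (!i) < G.outcome (pair i s x) (!i) := fun s x y => by
    simpa only [not_le] using (hle s y x).not
  -- once `i` is a literal, `pay (!i) y s` unfolds to `G.outcome (pair i s y) (!i)`
  cases i <;> rw [wDomIn_iff] <;> simp only [hle, hlt] <;> rfl

theorem WDomIn.trans {A B : ∀ j, Set (G.Strategy j)} {s x y : G.Strategy i}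
    (hBA : B (!i) ⊆ A (!i)) (hyx : WDomIn G A i y x) (hxs : WDomIn G B i x s) :
    WDomIn G B i y s :=
  ⟨fun σ hσ => (hxs.1 σ hσ).trans (hyx.1 σ (hBA hσ)),
    let ⟨σ, hσ, hlt⟩ := hxs.2; ⟨σ, hσ, hlt.trans_le (hyx.1 σ (hBA hσ))⟩⟩

theorem gamma_antitone (G : ExtGame Bool) : Antitone (gamma G) :=
  antitone_nat_of_succ_le fun _ _ _ hs => hs.1

theorem exists_mem_elimAll (A : ∀ j, Set (G.Strategy j)) (P : G.Strategy i → Prop)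
    (hP : ∀ s t, WDomIn G A i t s → P s → P t) (h : ∃ s ∈ A i, P s) :
    ∃ s ∈ elimAll G A i, P s := by
  -- a dominating strategy has a strictly larger payoff sum, so a maximiser of the sum survives
  let total (s : G.Strategy i) : ℝ := ∑ c ∈ (A (!i)).toFinite.toFinset, pay i s c
  obtain ⟨s, ⟨hsA, hsP⟩, hmax⟩ :=
    Set.Finite.exists_maximalFor total {s | s ∈ A i ∧ P s} (Set.toFinite _) h
  refine ⟨s, ⟨hsA, fun ⟨t, htA, hts⟩ => ?_⟩, hsP⟩
  obtain ⟨hle, c, hc, hlt⟩ := wDomIn_iff.1 hts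
  have : total s < total t :=
    Finset.sum_lt_sum (fun c hc => hle c (by simpa using hc)) ⟨c, by simpa using hc, hlt⟩
  exact this.not_ge (hmax ⟨htA, hP s t hts hsP⟩ this.le)

theorem exists_mem_gamma (P : G.Strategy i → Prop) :
    ∀ n, (∀ r < n, ∀ s t, WDomIn G (gamma G r) i t s → P s → P t) → (∃ s, P s) →
      ∃ s ∈ gamma G n i, P s
  | 0, _, ⟨s, hs⟩ => ⟨s, Set.mem_univ s, hs⟩
  | n + 1, hP, h =>
    exists_mem_elimAll _ P (hP n n.lt_succ_self)
      (exists_mem_gamma P n (fun r hr => hP r (hr.trans n.lt_succ_self)) h)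

theorem notMem_gamma_succ_of_wDomIn {n : ℕ} {s t : G.Strategy i}
    (h : WDomIn G (gamma G n) i t s) : s ∉ gamma G (n + 1) i := fun hs =>
  let ⟨t', ht', hdom⟩ := exists_mem_gamma (fun x => WDomIn G (gamma G n) i x s) n
    (fun _ hr _ _ hyx hxs => hyx.trans (gamma_antitone G hr.le _) hxs) ⟨t, h⟩
  hs.2 ⟨t', ht', hdom⟩

theorem exists_mem_gamma_le_pay {m n : ℕ} {M : ℝ} {C : Set (G.Strategy (!i))}
    (hC : C ⊆ gamma G m (!i)) (hnm : n ≤ m + 1) (h : ∃ s, ∀ c ∈ C, M ≤ pay i s c) :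
    ∃ s ∈ gamma G n i, ∀ c ∈ C, M ≤ pay i s c :=
  exists_mem_gamma _ n (fun r hr _ _ hts hs c hc =>
    (hs c hc).trans ((wDomIn_iff.1 hts).1 c (gamma_antitone G (by omega) _ (hC hc)))) h

theorem pay_le_pmax (A : ∀ j, Set (G.Strategy j)) {s : G.Strategy i} {c : G.Strategy (!i)}
    (hs : s ∈ A i) (hc : c ∈ A (!i)) : pay i s c ≤ pmax G A i :=
  le_csSup
    ((Set.finite_range fun σ => G.outcome σ i).subset
      (by rintro _ ⟨σ, -, rfl⟩; exact ⟨σ, rfl⟩)).bddAbove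
    ⟨pair i s c, pair_mem hs hc, rfl⟩

theorem winSet_nonempty_of_secures {k : ℕ} {s₀ : G.Strategy i}
    (h : Secures i (pmax G (gamma G k) i) s₀) : (winSet G (gamma G k) i).Nonempty := by
  obtain ⟨s, hs, hle⟩ := exists_mem_gamma_le_pay subset_rfl k.le_succ ⟨s₀, fun c _ => h c⟩
  refine ⟨s, hs, fun σ hσ => ?_⟩
  rw [update_self_eq_pair]
  exact le_antisymm (pay_le_pmax _ hs hσ) (hle _ hσ)

theorem exists_mem_gamma_succ_pay_eq_pmax {k : ℕ} {b : G.Strategy (!i)}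
    (hb : b ∈ loseSet G (gamma G k) i) :
    ∃ s ∈ gamma G (k + 1) i, pay i s b = pmax G (gamma G k) i := by
  obtain ⟨hbk, σ, -, rfl, hσ⟩ := hb
  obtain ⟨s, hs, hle⟩ := exists_mem_gamma_le_pay (Set.singleton_subset_iff.2 hbk) le_rfl
    ⟨σ i, by simpa [pay, pair_eta] using hσ.ge⟩
  exact ⟨s, hs, le_antisymm (pay_le_pmax _ hs.1 hbk) (hle _ rfl)⟩

theorem pmax_le_pay_of_repairable {k : ℕ} {s : G.Strategy i} {b : G.Strategy (!i)}
    (hs : s ∈ gamma G (k + 1) i) (hb : b ∈ gamma G k (!i))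
    (h : Repairable i (pmax G (gamma G k) i) s b) : pmax G (gamma G k) i ≤ pay i s b := by
  by_contra! hlt
  obtain ⟨d, hdb, hd⟩ := h
  refine notMem_gamma_succ_of_wDomIn (wDomIn_iff.2 ⟨fun c hc => ?_, b, hb, hlt.trans_le hdb⟩) hs
  calc pay i s c = min (pmax G (gamma G k) i) (pay i s c) :=
        (min_eq_right (pay_le_pmax _ hs.1 hc)).symm
    _ ≤ pay i d c := hd c

end Elimination

/-- Lemma (Ewerhart): in a finite strictly competitive extensive game, for every player `i`
and every `k ≥ 0`, if `win_i(Γ^k(G)) = ∅` then `lose_{-i}(Γ^k(G)) ∩ Γ^{k+2}_{-i}(G) = ∅`. -/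
theorem lose_eliminated_of_no_win (G : ExtGame Bool) (hsc : StrictlyCompetitiveExt G)
    (i : Bool) (k : ℕ) (hwin : winSet G (gamma G k) i = ∅) :
    loseSet G (gamma G k) i ∩ gamma G (k + 2) (!i) = ∅ := by
  refine Set.eq_empty_of_forall_notMem fun b ⟨hlose, hb⟩ => ?_
  obtain ⟨sbar, hsbar, hpay⟩ := exists_mem_gamma_succ_pay_eq_pmax hlose
  rcases exists_secures_or_exists_isPunishingDeviation i _ G sbar b hpay with
    ⟨s₀, hs₀⟩ | ⟨c, hlt, hdev⟩
  · exact (winSet_nonempty_of_secures hs₀).ne_empty hwin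
  refine notMem_gamma_succ_of_wDomIn
    (hsc.wDomIn_not_iff.2 ⟨fun s hs => ?_, sbar, hsbar, hpay ▸ hlt⟩) hb
  rcases hdev s with hle | ⟨hlt, hrep⟩
  · exact hle
  · exact hlt.le.trans (pmax_le_pay_of_repairable hs hlose.1 hrep)
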